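/- arXiv:1812.10589 — 4 statements merged into one kernel-verified Lean document; each statement's English description precedes it below -/
import Mathlib

section
/- If the function f belongs to the class Σ'(x) and b x²(3b − 4p) − 4 a q ≠ 0, then the second Taylor–Maclaurin coefficient of f satisfies |a₂| ≤ (|b x| · √|b x|) / √|b x²(3b − 4p) − 4 a q|. -/
/-!
Differentiating `f' = Ω(x, Φ) + 1 - a` at `0` gives `f''(0) = h₂ Φ'(0)` and
`f'''(0) = h₂ Φ''(0) + 2 h₃ Φ'(0)²`, and likewise for `g` with `Ψ`. Since `g` inverts `f`,
`g''(0) = -f''(0)` and `g'''(0) = 3 f''(0)² - f'''(0)`. Eliminating `Φ'(0)` and `Ψ'(0)` yields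
`f''(0)² (3 h₂² - 4 h₃) = h₂³ (Φ''(0) + Ψ''(0))`, where `3 h₂² - 4 h₃ = b x² (3b - 4p) - 4aq`,
and Cauchy's estimate `‖Φ''(0)‖, ‖Ψ''(0)‖ ≤ 2` for self-maps of the disc concludes.
-/

open Metric Filter Topology Set
open scoped Nat

section Calculus

variable {𝕜 : Type*} [NontriviallyNormedField 𝕜]

theorem deriv_quadratic (c₀ c₁ c₂ : 𝕜) :
    (deriv fun w => c₀ + c₁ * w + c₂ * w ^ 2) = fun w => c₁ + 2 * c₂ * w := by
  ext w
  have := (((hasDerivAt_id' w).const_mul c₁).const_add c₀).fun_add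
    ((hasDerivAt_pow 2 w).const_mul c₂)
  rw [this.deriv]
  push_cast
  ring

theorem deriv_deriv_quadratic (c₀ c₁ c₂ z : 𝕜) :
    deriv (deriv fun w => c₀ + c₁ * w + c₂ * w ^ 2) z = 2 * c₂ := by
  simp [deriv_quadratic]

variable [CompleteSpace 𝕜]

theorem deriv_deriv_fun_mul {u v : 𝕜 → 𝕜} {z : 𝕜} (hu : AnalyticAt 𝕜 u z)
    (hv : AnalyticAt 𝕜 v z) :
    deriv (deriv fun w => u w * v w) z =
      deriv (deriv u) z * v z + 2 * (deriv u z * deriv v z) + u z * deriv (deriv v) z := by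
  have h : (deriv fun w => u w * v w) =ᶠ[𝓝 z] fun w => deriv u w * v w + u w * deriv v w := by
    filter_upwards [hu.eventually_analyticAt, hv.eventually_analyticAt] with w huw hvw
    exact deriv_fun_mul huw.differentiableAt hvw.differentiableAt
  rw [h.deriv_eq, deriv_fun_add (by fun_prop) (by fun_prop),
    deriv_fun_mul (by fun_prop) (by fun_prop), deriv_fun_mul (by fun_prop) (by fun_prop)]
  ring

theorem deriv_deriv_fun_comp {G U : 𝕜 → 𝕜} {z : 𝕜} (hG : AnalyticAt 𝕜 G (U z))
    (hU : AnalyticAt 𝕜 U z) :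
    deriv (deriv fun w => G (U w)) z =
      deriv (deriv G) (U z) * deriv U z ^ 2 + deriv G (U z) * deriv (deriv U) z := by
  have h : (deriv fun w => G (U w)) =ᶠ[𝓝 z] fun w => deriv G (U w) * deriv U w := by
    filter_upwards [hU.continuousAt.eventually hG.eventually_analyticAt,
      hU.eventually_analyticAt] with w hGw hUw
    exact deriv_comp w hGw.differentiableAt hUw.differentiableAt
  have h' : deriv (fun w => deriv G (U w)) z = deriv (deriv G) (U z) * deriv U z :=
    deriv_comp (h₂ := deriv G) z hG.deriv.differentiableAt hU.differentiableAt
  rw [h.deriv_eq, deriv_fun_mul (by fun_prop) (by fun_prop), h']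
  ring

theorem deriv_deriv_of_eventually_comp_eq_self {f g : 𝕜 → 𝕜} {z : 𝕜} (hf : AnalyticAt 𝕜 f z)
    (hg : AnalyticAt 𝕜 g (f z)) (hgf : ∀ᶠ w in 𝓝 z, g (f w) = w) (hf1 : deriv f z = 1) :
    deriv (deriv g) (f z) = -deriv (deriv f) z ∧
      deriv (deriv (deriv g)) (f z) =
        3 * deriv (deriv f) z ^ 2 - deriv (deriv (deriv f)) z := by
  have hchain : (fun w => deriv g (f w) * deriv f w) =ᶠ[𝓝 z] fun _ => 1 := by
    have hid : (fun w => g (f w)) =ᶠ[𝓝 z] id := hgf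
    filter_upwards [hid.deriv, hf.eventually_analyticAt,
      hf.continuousAt.eventually hg.eventually_analyticAt] with w hw hfw hgw
    rw [← deriv_comp w hgw.differentiableAt hfw.differentiableAt]
    exact hw.trans (deriv_id w)
  have hg' : AnalyticAt 𝕜 (deriv g) (f z) := hg.deriv
  have hg1 : deriv g (f z) = 1 := by simpa [hf1] using hchain.self_of_nhds
  have h1 := hchain.deriv_eq
  have h2 := hchain.deriv.deriv_eq
  have hg'f : AnalyticAt 𝕜 (fun w => deriv g (f w)) z := hg'.comp hf
  have hcomp : deriv (fun w => deriv g (f w)) z = deriv (deriv g) (f z) * deriv f z :=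
    deriv_comp (h₂ := deriv g) z hg'.differentiableAt hf.differentiableAt
  rw [deriv_fun_mul (by fun_prop) (by fun_prop), hcomp, hf1, hg1, deriv_const] at h1
  rw [deriv_deriv_fun_mul hg'f hf.deriv, deriv_deriv_fun_comp hg' hf, hcomp, hf1, hg1] at h2
  simp only [deriv_const', deriv_const] at h2
  exact ⟨by linear_combination h1, by linear_combination h2 - 3 * deriv (deriv f) z * h1⟩

end Calculus

section Horadam

variable {𝕜 : Type*} [NontriviallyNormedField 𝕜] (a b p q x : 𝕜)

/-- The generating function `Ω(x, z)` of the Horadam polynomials `hₙ(x)`. -/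
def horadamGen (z : 𝕜) : 𝕜 :=
  (a + (b - a * p) * x * z) / (1 - p * x * z - q * z ^ 2)

theorem horadamGen_zero : horadamGen a b p q x 0 = a := by
  simp [horadamGen]

theorem analyticAt_horadamGen_zero : AnalyticAt 𝕜 (horadamGen a b p q x) 0 :=
  AnalyticAt.div (by fun_prop) (by fun_prop) (by simp)

/-- Both sides are written as quadratics in `z` so that `deriv_quadratic` applies. -/
theorem horadamGen_mul_eventuallyEq :
    (fun z => horadamGen a b p q x z * (1 + -(p * x) * z + -q * z ^ 2)) =ᶠ[𝓝 0]
      fun z => a + (b - a * p) * x * z + 0 * z ^ 2 := by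
  have hD : ContinuousAt (fun z : 𝕜 => 1 - p * x * z - q * z ^ 2) 0 := by fun_prop
  filter_upwards [hD.eventually_ne (by simp : (1 : 𝕜) - p * x * 0 - q * 0 ^ 2 ≠ 0)] with z hz
  rw [horadamGen, show 1 + -(p * x) * z + -q * z ^ 2 = 1 - p * x * z - q * z ^ 2 by ring,
    div_mul_cancel₀ _ hz]
  ring

theorem deriv_horadamGen_zero : deriv (horadamGen a b p q x) 0 = b * x := by
  have h := (horadamGen_mul_eventuallyEq a b p q x).deriv_eq
  rw [deriv_fun_mul (analyticAt_horadamGen_zero a b p q x).differentiableAt (by fun_prop),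
    deriv_quadratic, deriv_quadratic, horadamGen_zero] at h
  linear_combination h

variable [CompleteSpace 𝕜]

theorem deriv_deriv_horadamGen_zero :
    deriv (deriv (horadamGen a b p q x)) 0 = 2 * (p * b * x ^ 2 + a * q) := by
  have h := (horadamGen_mul_eventuallyEq a b p q x).deriv.deriv_eq
  rw [deriv_deriv_fun_mul (analyticAt_horadamGen_zero a b p q x) (by fun_prop),
    deriv_deriv_quadratic, deriv_deriv_quadratic, deriv_quadratic, horadamGen_zero,
    deriv_horadamGen_zero] at h
  linear_combination h

variable {a b p q x}

/-- Here `b * x = h₂(x)` and `p * b * x ^ 2 + a * q = h₃(x)`. -/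
theorem deriv_deriv_of_deriv_eventuallyEq_horadamGen_comp {f Φ : 𝕜 → 𝕜} {c : 𝕜}
    (hΦ : AnalyticAt 𝕜 Φ 0) (hΦ0 : Φ 0 = 0)
    (hf : deriv f =ᶠ[𝓝 0] fun z => horadamGen a b p q x (Φ z) + c) :
    deriv (deriv f) 0 = b * x * deriv Φ 0 ∧
      deriv (deriv (deriv f)) 0 =
        b * x * deriv (deriv Φ) 0 + 2 * (p * b * x ^ 2 + a * q) * deriv Φ 0 ^ 2 := by
  have hΩ : AnalyticAt 𝕜 (horadamGen a b p q x) (Φ 0) := by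
    rw [hΦ0]; exact analyticAt_horadamGen_zero a b p q x
  have hcomp : deriv (fun z => horadamGen a b p q x (Φ z)) 0 =
      deriv (horadamGen a b p q x) (Φ 0) * deriv Φ 0 :=
    deriv_comp 0 hΩ.differentiableAt hΦ.differentiableAt
  constructor
  · rw [hf.deriv_eq, deriv_add_const, hcomp, hΦ0, deriv_horadamGen_zero]
  · rw [hf.deriv.deriv_eq, deriv_add_const', deriv_deriv_fun_comp hΩ hΦ, hΦ0,
      deriv_horadamGen_zero, deriv_deriv_horadamGen_zero]
    ring

theorem sq_deriv_deriv_mul_eq_of_horadamGen_comp {f g Φ Ψ : 𝕜 → 𝕜} {c c' : 𝕜}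
    (hf : AnalyticAt 𝕜 f 0) (hg : AnalyticAt 𝕜 g 0) (hf0 : f 0 = 0) (hf1 : deriv f 0 = 1)
    (hgf : ∀ᶠ z in 𝓝 0, g (f z) = z) (hΦ : AnalyticAt 𝕜 Φ 0) (hΦ0 : Φ 0 = 0)
    (hΨ : AnalyticAt 𝕜 Ψ 0) (hΨ0 : Ψ 0 = 0)
    (hfΩ : deriv f =ᶠ[𝓝 0] fun z => horadamGen a b p q x (Φ z) + c)
    (hgΩ : deriv g =ᶠ[𝓝 0] fun w => horadamGen a b p q x (Ψ w) + c') :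
    deriv (deriv f) 0 ^ 2 * (3 * (b * x) ^ 2 - 4 * (p * b * x ^ 2 + a * q)) =
      (b * x) ^ 3 * (deriv (deriv Φ) 0 + deriv (deriv Ψ) 0) := by
  obtain ⟨hf2, hf3⟩ := deriv_deriv_of_deriv_eventuallyEq_horadamGen_comp hΦ hΦ0 hfΩ
  obtain ⟨hg2, hg3⟩ := deriv_deriv_of_deriv_eventuallyEq_horadamGen_comp hΨ hΨ0 hgΩ
  obtain ⟨hgf2, hgf3⟩ :=
    deriv_deriv_of_eventually_comp_eq_self hf (by rw [hf0]; exact hg) hgf hf1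
  rw [hf0] at hgf2 hgf3
  linear_combination (b * x) ^ 2 * (hf3 + hg3 - hgf3) + 2 * (p * b * x ^ 2 + a * q) *
    ((deriv (deriv g) 0 - deriv (deriv f) 0) * hgf2 -
      (b * x * deriv Φ 0 + deriv (deriv f) 0) * hf2 -
      (b * x * deriv Ψ 0 + deriv (deriv g) 0) * hg2)

end Horadam

theorem Complex.norm_iteratedDeriv_le_of_forall_mem_ball_norm_le {F : Type*}
    [NormedAddCommGroup F] [NormedSpace ℂ F] [CompleteSpace F] {f : ℂ → F} {c : ℂ} {R C : ℝ}
    (n : ℕ) (hR : 0 < R) (hf : DifferentiableOn ℂ f (ball c R))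
    (hC : ∀ z ∈ ball c R, ‖f z‖ ≤ C) :
    ‖iteratedDeriv n f c‖ ≤ n ! * C / R ^ n := by
  have hr : ∀ r ∈ Ioo 0 R, ‖iteratedDeriv n f c‖ ≤ n ! * C / r ^ n := fun r hr =>
    norm_iteratedDeriv_le_of_forall_mem_sphere_norm_le n hr.1
      (hf.diffContOnCl_ball (closedBall_subset_ball hr.2))
      fun z hz => hC z (sphere_subset_closedBall.trans (closedBall_subset_ball hr.2) hz)
  have hlim : Tendsto (fun r : ℝ => n ! * C / r ^ n) (𝓝[<] R) (𝓝 (n ! * C / R ^ n)) :=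
    (tendsto_const_nhds.div ((continuous_pow n).tendsto R) (pow_ne_zero n hR.ne')).mono_left
      nhdsWithin_le_nhds
  exact ge_of_tendsto hlim (eventually_of_mem (Ioo_mem_nhdsLT hR) hr)

theorem norm_deriv_deriv_zero_le_two {Φ : ℂ → ℂ} (hΦ : DifferentiableOn ℂ Φ (ball 0 1))
    (hΦ1 : ∀ z ∈ ball (0 : ℂ) 1, ‖Φ z‖ ≤ 1) : ‖deriv (deriv Φ) 0‖ ≤ 2 := by
  simpa [iteratedDeriv_succ] using
    Complex.norm_iteratedDeriv_le_of_forall_mem_ball_norm_le 2 one_pos hΦ hΦ1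

theorem le_mul_sqrt_div_sqrt_of_sq_mul_le {t m d : ℝ} (hm : 0 ≤ m) (hd : 0 < d)
    (h : t ^ 2 * d ≤ m ^ 3) : t ≤ m * √m / √d := by
  have hsq : t ^ 2 ≤ m ^ 3 / d := (le_div_iff₀ hd).2 h
  calc t ≤ |t| := le_abs_self t
    _ ≤ √(m ^ 3 / d) := Real.abs_le_sqrt hsq
    _ = m * √m / √d := by
      rw [Real.sqrt_div' _ hd.le, show m ^ 3 = m ^ 2 * m by ring,
        Real.sqrt_mul (sq_nonneg m), Real.sqrt_sq hm]

theorem norm_div_two_le_of_sq_mul_eq {s u v : ℂ} {k d : ℝ} (hd : d ≠ 0)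
    (h : s ^ 2 * d = (k : ℂ) ^ 3 * (u + v)) (hu : ‖u‖ ≤ 2) (hv : ‖v‖ ≤ 2) :
    ‖s / 2‖ ≤ |k| * √|k| / √|d| := by
  refine le_mul_sqrt_div_sqrt_of_sq_mul_le (abs_nonneg k) (abs_pos.2 hd) ?_
  calc ‖s / 2‖ ^ 2 * |d| = ‖s ^ 2 * d‖ / 4 := by
        rw [norm_mul, norm_pow, norm_div, Complex.norm_real, Real.norm_eq_abs]
        norm_num
        ring
    _ = |k| ^ 3 * ‖u + v‖ / 4 := by
        rw [h, norm_mul, norm_pow, Complex.norm_real, Real.norm_eq_abs]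
    _ ≤ |k| ^ 3 * (2 + 2) / 4 := by
        gcongr
        exact (norm_add_le _ _).trans (add_le_add hu hv)
    _ = |k| ^ 3 := by ring

theorem abs_a2_le_of_mem_SigmaPrime_general
    (a b p q x : ℝ) (f g Φ Ψ : ℂ → ℂ)
    (hf : AnalyticOnNhd ℂ f (ball 0 1))
    (hf0 : f 0 = 0) (hf1 : deriv f 0 = 1)
    (hg : AnalyticOnNhd ℂ g (ball 0 1))
    (hgf : ∀ᶠ z in nhds (0 : ℂ), g (f z) = z)
    (hΦ : AnalyticOnNhd ℂ Φ (ball 0 1)) (hΦ0 : Φ 0 = 0)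
    (hΦlt : ∀ z ∈ ball (0 : ℂ) 1, ‖Φ z‖ < 1)
    (hΨ : AnalyticOnNhd ℂ Ψ (ball 0 1)) (hΨ0 : Ψ 0 = 0)
    (hΨlt : ∀ w ∈ ball (0 : ℂ) 1, ‖Ψ w‖ < 1)
    (hfeq : ∀ z ∈ ball (0 : ℂ) 1,
      deriv f z = ((a : ℂ) + ((b : ℂ) - (a : ℂ) * (p : ℂ)) * (x : ℂ) * Φ z) /
          ((1 : ℂ) - (p : ℂ) * (x : ℂ) * Φ z - (q : ℂ) * (Φ z) ^ 2) + 1 - (a : ℂ))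
    (hgeq : ∀ w ∈ ball (0 : ℂ) 1,
      deriv g w = ((a : ℂ) + ((b : ℂ) - (a : ℂ) * (p : ℂ)) * (x : ℂ) * Ψ w) /
          ((1 : ℂ) - (p : ℂ) * (x : ℂ) * Ψ w - (q : ℂ) * (Ψ w) ^ 2) + 1 - (a : ℂ))
    (hne : b * x ^ 2 * (3 * b - 4 * p) - 4 * a * q ≠ 0) :
    ‖iteratedDeriv 2 f 0 / 2‖ ≤
      (|b * x| * Real.sqrt |b * x|) / Real.sqrt |b * x ^ 2 * (3 * b - 4 * p) - 4 * a * q| := by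
  have h0 : (0 : ℂ) ∈ ball (0 : ℂ) 1 := mem_ball_self one_pos
  have hball : ball (0 : ℂ) 1 ∈ 𝓝 0 := ball_mem_nhds 0 one_pos
  have key := sq_deriv_deriv_mul_eq_of_horadamGen_comp (hf 0 h0) (hg 0 h0) hf0 hf1 hgf
    (hΦ 0 h0) hΦ0 (hΨ 0 h0) hΨ0
    (eventually_of_mem hball fun z hz => (hfeq z hz).trans (add_sub_assoc _ _ _))
    (eventually_of_mem hball fun w hw => (hgeq w hw).trans (add_sub_assoc _ _ _))
  rw [iteratedDeriv_succ, iteratedDeriv_one]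
  refine norm_div_two_le_of_sq_mul_eq hne ?_
    (norm_deriv_deriv_zero_le_two hΦ.differentiableOn fun z hz => (hΦlt z hz).le)
    (norm_deriv_deriv_zero_le_two hΨ.differentiableOn fun w hw => (hΨlt w hw).le)
  push_cast
  linear_combination key

/-- **Theorem 2.2, bound (8).** If `f` belongs to the class `Σ'(x)` (defined via the
Horadam generating function `Ω(x,z) = (a + (b - a p) x z)/(1 - p x z - q z²)`) and
`b x² (3 b - 4 p) - 4 a q ≠ 0`, then the second Taylor–Maclaurin coefficient
`a₂ = f''(0)/2` satisfies `|a₂| ≤ |b x| √|b x| / √|b x² (3 b - 4 p) - 4 a q|`. -/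
theorem abs_a2_le_of_mem_SigmaPrime
    (a b p q x : ℝ) (f g Φ Ψ : ℂ → ℂ)
    (hf : AnalyticOnNhd ℂ f (ball 0 1)) (hfinj : Set.InjOn f (ball 0 1))
    (hf0 : f 0 = 0) (hf1 : deriv f 0 = 1)
    (hg : AnalyticOnNhd ℂ g (ball 0 1)) (hginj : Set.InjOn g (ball 0 1))
    (hg0 : g 0 = 0)
    (hgf : ∀ᶠ z in nhds (0 : ℂ), g (f z) = z)
    (hfg : ∀ᶠ w in nhds (0 : ℂ), f (g w) = w)
    (hΦ : AnalyticOnNhd ℂ Φ (ball 0 1)) (hΦ0 : Φ 0 = 0)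
    (hΦlt : ∀ z ∈ ball (0 : ℂ) 1, ‖Φ z‖ < 1)
    (hΨ : AnalyticOnNhd ℂ Ψ (ball 0 1)) (hΨ0 : Ψ 0 = 0)
    (hΨlt : ∀ w ∈ ball (0 : ℂ) 1, ‖Ψ w‖ < 1)
    (hΦden : ∀ z ∈ ball (0 : ℂ) 1,
      (1 : ℂ) - (p : ℂ) * (x : ℂ) * Φ z - (q : ℂ) * (Φ z) ^ 2 ≠ 0)
    (hΨden : ∀ w ∈ ball (0 : ℂ) 1,
      (1 : ℂ) - (p : ℂ) * (x : ℂ) * Ψ w - (q : ℂ) * (Ψ w) ^ 2 ≠ 0)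
    (hfeq : ∀ z ∈ ball (0 : ℂ) 1,
      deriv f z = ((a : ℂ) + ((b : ℂ) - (a : ℂ) * (p : ℂ)) * (x : ℂ) * Φ z) /
          ((1 : ℂ) - (p : ℂ) * (x : ℂ) * Φ z - (q : ℂ) * (Φ z) ^ 2) + 1 - (a : ℂ))
    (hgeq : ∀ w ∈ ball (0 : ℂ) 1,
      deriv g w = ((a : ℂ) + ((b : ℂ) - (a : ℂ) * (p : ℂ)) * (x : ℂ) * Ψ w) /
          ((1 : ℂ) - (p : ℂ) * (x : ℂ) * Ψ w - (q : ℂ) * (Ψ w) ^ 2) + 1 - (a : ℂ))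
    (hne : b * x ^ 2 * (3 * b - 4 * p) - 4 * a * q ≠ 0) :
    ‖iteratedDeriv 2 f 0 / 2‖ ≤
      (|b * x| * Real.sqrt |b * x|) / Real.sqrt |b * x ^ 2 * (3 * b - 4 * p) - 4 * a * q| :=
  abs_a2_le_of_mem_SigmaPrime_general a b p q x f g Φ Ψ hf hf0 hf1 hg hgf hΦ hΦ0 hΦlt hΨ hΨ0 hΨlt
    hfeq hgeq hne
end

section
/- Let t be a real number with 1/2 < t < 1. If the function f belongs to the class Σ'(t), then the third Taylor–Maclaurin coefficient of f satisfies |a₃| ≤ 2t/3 + t². -/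
/-!
Writing `f' = Ω(t, ·) ∘ Φ` with `Ω(t, w) = 1 / (1 - 2tw + w²) = 1 + 2t w + (4t² - 1) w² + ⋯`, the
second-order chain rule gives `6 a₃ = f'''(0) = 2 (4t² - 1) Φ'(0)² + 2t Φ''(0)`. Cauchy's estimates
for a self-map of the unit disc give `|Φ'(0)| ≤ 1` and `|Φ''(0)| ≤ 2`, hence
`|a₃| ≤ (4t² - 1 + 2t) / 3 ≤ 2t/3 + t²` because `t < 1`.
-/

open Filter Metric Topology

namespace Complex

variable {F : Type*} [NormedAddCommGroup F] [NormedSpace ℂ F] [CompleteSpace F]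

theorem norm_iteratedDeriv_le_of_forall_mem_ball_norm_le_s4 {c : ℂ} {R C : ℝ} {f : ℂ → F}
    (n : ℕ) (hR : 0 < R) (hf : DifferentiableOn ℂ f (ball c R))
    (hC : ∀ z ∈ ball c R, ‖f z‖ ≤ C) :
    ‖iteratedDeriv n f c‖ ≤ n.factorial * C / R ^ n := by
  have hcont : ContinuousAt (fun r : ℝ => n.factorial * C / r ^ n) R :=
    continuousAt_const.div (continuousAt_id.pow n) (pow_ne_zero n hR.ne')
  refine ge_of_tendsto (hcont.tendsto.mono_left (nhdsWithin_le_nhds (s := Set.Iio R))) ?_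
  filter_upwards [Ioo_mem_nhdsLT hR] with r hr
  exact norm_iteratedDeriv_le_of_forall_mem_sphere_norm_le n hr.1
    (hf.diffContOnCl_ball (closedBall_subset_ball hr.2))
    fun z hz => hC z (sphere_subset_ball hr.2 hz)

theorem norm_iteratedDeriv_le_factorial_of_norm_le_one {c : ℂ} {f : ℂ → F} (n : ℕ)
    (hf : DifferentiableOn ℂ f (ball c 1)) (h : ∀ z ∈ ball c 1, ‖f z‖ ≤ 1) :
    ‖iteratedDeriv n f c‖ ≤ n.factorial := by
  simpa using norm_iteratedDeriv_le_of_forall_mem_ball_norm_le_s4 n one_pos hf h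

end Complex

section
variable {𝕜 F : Type*} [NontriviallyNormedField 𝕜] [CompleteSpace 𝕜]
  [NormedAddCommGroup F] [NormedSpace 𝕜 F] [CompleteSpace F]

theorem iteratedDeriv_two_comp {h : 𝕜 → F} {Φ : 𝕜 → 𝕜} {z : 𝕜} (hh : AnalyticAt 𝕜 h (Φ z))
    (hΦ : AnalyticAt 𝕜 Φ z) :
    iteratedDeriv 2 (h ∘ Φ) z =
      deriv Φ z ^ 2 • iteratedDeriv 2 h (Φ z) + iteratedDeriv 2 Φ z • deriv h (Φ z) := by
  have hderiv : deriv (h ∘ Φ) =ᶠ[𝓝 z] fun w => deriv Φ w • deriv h (Φ w) := by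
    filter_upwards [hΦ.eventually_analyticAt,
      hΦ.continuousAt.eventually hh.eventually_analyticAt] with w hΦw hhw
    exact deriv.scomp w hhw.differentiableAt hΦw.differentiableAt
  have hsecond : HasDerivAt (fun w => deriv Φ w • deriv h (Φ w))
      (deriv Φ z • (deriv Φ z • deriv (deriv h) (Φ z)) + deriv (deriv Φ) z • deriv h (Φ z)) z :=
    hΦ.deriv.differentiableAt.hasDerivAt.smul
      (hh.deriv.differentiableAt.hasDerivAt.scomp z hΦ.differentiableAt.hasDerivAt)
  rw [iteratedDeriv_succ', iteratedDeriv_one, hderiv.deriv_eq, hsecond.deriv, smul_smul, ← sq,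
    iteratedDeriv_succ', iteratedDeriv_one, iteratedDeriv_succ', iteratedDeriv_one]

end

section
variable {𝕜 : Type*} [NontriviallyNormedField 𝕜]

/-- `Ω(t, w)`, the generating function `∑ Uₙ(t) wⁿ` of the Chebyshev polynomials of the second
kind. -/
def chebyshevUGen (t w : 𝕜) : 𝕜 := 1 / (1 - 2 * t * w + w ^ 2)

theorem analyticAt_chebyshevUGen_zero (t : 𝕜) : AnalyticAt 𝕜 (chebyshevUGen t) 0 :=
  analyticAt_const.div (by fun_prop) (by simp)

theorem chebyshevUGen_zero (t : 𝕜) : chebyshevUGen t 0 = 1 := by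
  simp [chebyshevUGen]

theorem hasDerivAt_chebyshevUGen {t w : 𝕜} (hw : 1 - 2 * t * w + w ^ 2 ≠ 0) :
    HasDerivAt (chebyshevUGen t) ((2 * t - 2 * w) * chebyshevUGen t w ^ 2) w := by
  have hden : HasDerivAt (fun w => 1 - 2 * t * w + w ^ 2) (-(2 * t) + 2 * w) w := by
    refine ((((hasDerivAt_id' w).const_mul (2 * t)).const_sub 1).add
      (hasDerivAt_pow 2 w)).congr_deriv ?_
    ring
  refine ((hasDerivAt_const w (1 : 𝕜)).div hden hw).congr_deriv ?_
  simp only [chebyshevUGen]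
  field_simp
  ring

theorem deriv_chebyshevUGen_zero (t : 𝕜) : deriv (chebyshevUGen t) 0 = 2 * t := by
  simp [(hasDerivAt_chebyshevUGen (t := t) (w := 0) (by simp)).deriv, chebyshevUGen_zero]

theorem iteratedDeriv_two_chebyshevUGen_zero (t : 𝕜) :
    iteratedDeriv 2 (chebyshevUGen t) 0 = 2 * (4 * t ^ 2 - 1) := by
  have hden : ∀ᶠ w in 𝓝 (0 : 𝕜), 1 - 2 * t * w + w ^ 2 ≠ 0 :=
    (show Continuous fun w : 𝕜 => 1 - 2 * t * w + w ^ 2 by fun_prop).continuousAt.eventually_ne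
      (by simp)
  have hderiv : deriv (chebyshevUGen t) =ᶠ[𝓝 0]
      fun w => (2 * t - 2 * w) * chebyshevUGen t w ^ 2 :=
    hden.mono fun w hw => (hasDerivAt_chebyshevUGen hw).deriv
  have hsecond : HasDerivAt (fun w => (2 * t - 2 * w) * chebyshevUGen t w ^ 2)
      (2 * (4 * t ^ 2 - 1)) 0 := by
    refine ((((hasDerivAt_id' (0 : 𝕜)).const_mul 2).const_sub (2 * t)).mul
      ((hasDerivAt_chebyshevUGen (by simp)).pow 2)).congr_deriv ?_
    simp only [Pi.pow_apply, chebyshevUGen_zero]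
    ring
  rw [iteratedDeriv_succ', iteratedDeriv_one, hderiv.deriv_eq, hsecond.deriv]

end

theorem iteratedDeriv_three_eq_of_deriv_eventuallyEq_chebyshevUGen_comp {𝕜 : Type*}
    [NontriviallyNormedField 𝕜] [CompleteSpace 𝕜] {t : 𝕜} {f Φ : 𝕜 → 𝕜}
    (hΦ : AnalyticAt 𝕜 Φ 0) (hΦ0 : Φ 0 = 0) (hf : deriv f =ᶠ[𝓝 0] chebyshevUGen t ∘ Φ) :
    iteratedDeriv 3 f 0 = 2 * (4 * t ^ 2 - 1) * deriv Φ 0 ^ 2 + 2 * t * iteratedDeriv 2 Φ 0 := by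
  have hU : AnalyticAt 𝕜 (chebyshevUGen t) (Φ 0) := by
    rw [hΦ0]; exact analyticAt_chebyshevUGen_zero t
  rw [iteratedDeriv_succ', hf.iteratedDeriv_eq, iteratedDeriv_two_comp hU hΦ, hΦ0,
    iteratedDeriv_two_chebyshevUGen_zero, deriv_chebyshevUGen_zero, smul_eq_mul, smul_eq_mul]
  ring

theorem chebyshev_abs_a3_le_general
    (t : ℝ) (f Φ : ℂ → ℂ)
    (ht : 1 / 2 < t) (ht1 : t < 1)
    (hΦ : AnalyticOnNhd ℂ Φ (ball 0 1)) (hΦ0 : Φ 0 = 0)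
    (hΦlt : ∀ z ∈ ball (0 : ℂ) 1, ‖Φ z‖ < 1)
    (hfeq : ∀ z ∈ ball (0 : ℂ) 1,
      deriv f z = 1 / ((1 : ℂ) - 2 * (t : ℂ) * Φ z + (Φ z) ^ 2)) :
    ‖iteratedDeriv 3 f 0 / 6‖ ≤ 2 * t / 3 + t ^ 2 := by
  have hΦle : ∀ z ∈ ball (0 : ℂ) 1, ‖Φ z‖ ≤ 1 := fun z hz => (hΦlt z hz).le
  have hc1 : ‖deriv Φ 0‖ ≤ 1 := by
    simpa using Complex.norm_iteratedDeriv_le_factorial_of_norm_le_one 1 hΦ.differentiableOn hΦle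
  have hc2 : ‖iteratedDeriv 2 Φ 0‖ ≤ 2 := by
    simpa using Complex.norm_iteratedDeriv_le_factorial_of_norm_le_one 2 hΦ.differentiableOn hΦle
  have hcoef : ‖2 * (4 * (t : ℂ) ^ 2 - 1)‖ = 2 * (4 * t ^ 2 - 1) := by
    rw [show 2 * (4 * (t : ℂ) ^ 2 - 1) = ((2 * (4 * t ^ 2 - 1) : ℝ) : ℂ) by push_cast; ring,
      Complex.norm_real, Real.norm_of_nonneg (by nlinarith)]
  rw [iteratedDeriv_three_eq_of_deriv_eventuallyEq_chebyshevUGen_comp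
    (hΦ 0 (mem_ball_self one_pos)) hΦ0 (eventually_of_mem (ball_mem_nhds 0 one_pos) hfeq)]
  calc ‖(2 * (4 * (t : ℂ) ^ 2 - 1) * deriv Φ 0 ^ 2 + 2 * t * iteratedDeriv 2 Φ 0) / 6‖
      ≤ (2 * (4 * t ^ 2 - 1) * ‖deriv Φ 0‖ ^ 2 + 2 * t * ‖iteratedDeriv 2 Φ 0‖) / 6 := by
        have h2t : ‖2 * (t : ℂ)‖ = 2 * t := by
          rw [norm_mul, Complex.norm_real, Real.norm_of_nonneg (by linarith)]; norm_num
        rw [norm_div, Complex.norm_ofNat, ← hcoef, ← h2t, ← norm_pow, ← norm_mul, ← norm_mul]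
        gcongr
        exact norm_add_le _ _
    _ ≤ (2 * (4 * t ^ 2 - 1) * 1 ^ 2 + 2 * t * 2) / 6 := by gcongr; nlinarith
    _ ≤ 2 * t / 3 + t ^ 2 := by nlinarith

/-- **Corollary 2.3, bound (26).** For `1/2 < t < 1`, if `f` belongs to the Chebyshev class `Sigma'(t)`, then `|a₃| ≤ 2t/3 + t²`. -/
theorem chebyshev_abs_a3_le
    (t : ℝ) (f g Φ Ψ : ℂ → ℂ)
    (ht : 1 / 2 < t) (ht1 : t < 1)
    (hf : AnalyticOnNhd ℂ f (ball 0 1)) (hfinj : Set.InjOn f (ball 0 1))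
    (hf0 : f 0 = 0) (hf1 : deriv f 0 = 1)
    (hg : AnalyticOnNhd ℂ g (ball 0 1)) (hginj : Set.InjOn g (ball 0 1))
    (hg0 : g 0 = 0)
    (hgf : ∀ᶠ z in nhds (0 : ℂ), g (f z) = z)
    (hfg : ∀ᶠ w in nhds (0 : ℂ), f (g w) = w)
    (hΦ : AnalyticOnNhd ℂ Φ (ball 0 1)) (hΦ0 : Φ 0 = 0)
    (hΦlt : ∀ z ∈ ball (0 : ℂ) 1, ‖Φ z‖ < 1)
    (hΨ : AnalyticOnNhd ℂ Ψ (ball 0 1)) (hΨ0 : Ψ 0 = 0)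
    (hΨlt : ∀ w ∈ ball (0 : ℂ) 1, ‖Ψ w‖ < 1)
    (hΦden : ∀ z ∈ ball (0 : ℂ) 1, (1 : ℂ) - 2 * (t : ℂ) * Φ z + (Φ z) ^ 2 ≠ 0)
    (hΨden : ∀ w ∈ ball (0 : ℂ) 1, (1 : ℂ) - 2 * (t : ℂ) * Ψ w + (Ψ w) ^ 2 ≠ 0)
    (hfeq : ∀ z ∈ ball (0 : ℂ) 1,
      deriv f z = 1 / ((1 : ℂ) - 2 * (t : ℂ) * Φ z + (Φ z) ^ 2))
    (hgeq : ∀ w ∈ ball (0 : ℂ) 1,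
      deriv g w = 1 / ((1 : ℂ) - 2 * (t : ℂ) * Ψ w + (Ψ w) ^ 2)) :
    ‖iteratedDeriv 3 f 0 / 6‖ ≤ 2 * t / 3 + t ^ 2 :=
  chebyshev_abs_a3_le_general t f Φ ht ht1 hΦ hΦ0 hΦlt hfeq
end

section
/- Let h₂, h₃ be real numbers with h₂ ≠ 0 and 6h₂² − 8h₃ ≠ 0, let η be a real number, and let a₂, a₃, p₁, p₂, q₁, q₂ be complex numbers satisfying 2a₂ = h₂ p₁, 3a₃ = h₂ p₂ + h₃ p₁², −2a₂ = h₂ q₁, and 3(2a₂² − a₃) = h₂ q₂ + h₃ q₁². Then a₃ − η a₂² = h₂ [ (Θ + 1/6) p₂ + (Θ − 1/6) q₂ ], where Θ = h₂² (1 − η)/(6h₂² − 8h₃). Consequently, if in addition |p₂| ≤ 1 and |q₂| ≤ 1, then |a₃ − η a₂²| ≤ |h₂|/3 when |Θ| ≤ 1/6, and |a₃ − η a₂²| ≤ 2|h₂| |Θ| when |Θ| ≥ 1/6. -/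
/-!
Since `2a₂ = h₂ p₁ = -h₂ q₁`, the quadratic terms `h₃ p₁²` and `h₃ q₁²` coincide and equal
`4 h₃ a₂² / h₂²`. Adding and subtracting the relations for `a₃` and `2a₂² - a₃` therefore gives
`(6h₂² - 8h₃) a₂² = h₂³ (p₂ + q₂)` and `6 (a₃ - a₂²) = h₂ (p₂ - q₂)`, and
`a₃ - η a₂² = (1 - η) a₂² + (a₃ - a₂²)` is the stated combination of `p₂` and `q₂`.
The estimates follow from the triangle inequality and `|Θ + c| + |Θ - c| = 2 max |Θ| c`.
-/

section Identity

variable {K : Type*} [Field K]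

def feketeSzegoTheta (h₂ h₃ η : K) : K := h₂ ^ 2 * (1 - η) / (6 * h₂ ^ 2 - 8 * h₃)

theorem den_mul_sq_eq_of_coeff_relations {h₂ h₃ a₂ a₃ p₁ p₂ q₁ q₂ : K}
    (e15 : 2 * a₂ = h₂ * p₁) (e16 : 3 * a₃ = h₂ * p₂ + h₃ * p₁ ^ 2)
    (e17 : -2 * a₂ = h₂ * q₁) (e18 : 3 * (2 * a₂ ^ 2 - a₃) = h₂ * q₂ + h₃ * q₁ ^ 2) :
    (6 * h₂ ^ 2 - 8 * h₃) * a₂ ^ 2 = h₂ ^ 3 * (p₂ + q₂) := by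
  have hp : h₂ ^ 2 * p₁ ^ 2 = 4 * a₂ ^ 2 := by linear_combination (-2 * a₂ - h₂ * p₁) * e15
  have hq : h₂ ^ 2 * q₁ ^ 2 = 4 * a₂ ^ 2 := by linear_combination (2 * a₂ - h₂ * q₁) * e17
  linear_combination h₂ ^ 2 * e16 + h₂ ^ 2 * e18 + h₃ * hp + h₃ * hq

theorem six_mul_sub_sq_eq_of_coeff_relations {h₂ h₃ a₂ a₃ p₁ p₂ q₁ q₂ : K} (hh₂ : h₂ ≠ 0)
    (e15 : 2 * a₂ = h₂ * p₁) (e16 : 3 * a₃ = h₂ * p₂ + h₃ * p₁ ^ 2)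
    (e17 : -2 * a₂ = h₂ * q₁) (e18 : 3 * (2 * a₂ ^ 2 - a₃) = h₂ * q₂ + h₃ * q₁ ^ 2) :
    6 * (a₃ - a₂ ^ 2) = h₂ * (p₂ - q₂) := by
  have hq₁ : q₁ = -p₁ := mul_left_cancel₀ hh₂ (by linear_combination -e17 - e15)
  subst hq₁
  linear_combination e16 - e18

theorem sub_mul_sq_eq_of_coeff_relations [CharZero K] {h₂ h₃ η a₂ a₃ p₁ p₂ q₁ q₂ : K}
    (hh₂ : h₂ ≠ 0) (hden : 6 * h₂ ^ 2 - 8 * h₃ ≠ 0)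
    (e15 : 2 * a₂ = h₂ * p₁) (e16 : 3 * a₃ = h₂ * p₂ + h₃ * p₁ ^ 2)
    (e17 : -2 * a₂ = h₂ * q₁) (e18 : 3 * (2 * a₂ ^ 2 - a₃) = h₂ * q₂ + h₃ * q₁ ^ 2) :
    a₃ - η * a₂ ^ 2 =
      h₂ * ((feketeSzegoTheta h₂ h₃ η + 1 / 6) * p₂ + (feketeSzegoTheta h₂ h₃ η - 1 / 6) * q₂) := by
  have hsum := den_mul_sq_eq_of_coeff_relations e15 e16 e17 e18
  have hdiff := six_mul_sub_sq_eq_of_coeff_relations hh₂ e15 e16 e17 e18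
  have hΘ : feketeSzegoTheta h₂ h₃ η * (6 * h₂ ^ 2 - 8 * h₃) = h₂ ^ 2 * (1 - η) :=
    div_mul_cancel₀ _ hden
  have hη : (1 - η) * a₂ ^ 2 = feketeSzegoTheta h₂ h₃ η * h₂ * (p₂ + q₂) :=
    mul_left_cancel₀ hden (by linear_combination (1 - η) * hsum - h₂ * (p₂ + q₂) * hΘ)
  linear_combination hη + hdiff / 6

end Identity

theorem norm_mul_add_mul_le_of_norm_le_one {R : Type*} [SeminormedRing R] {a b p q : R}
    (hp : ‖p‖ ≤ 1) (hq : ‖q‖ ≤ 1) : ‖a * p + b * q‖ ≤ ‖a‖ + ‖b‖ :=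
  calc ‖a * p + b * q‖ ≤ ‖a‖ * ‖p‖ + ‖b‖ * ‖q‖ :=
        norm_add_le_of_le (norm_mul_le a p) (norm_mul_le b q)
    _ ≤ ‖a‖ * 1 + ‖b‖ * 1 := by gcongr
    _ = ‖a‖ + ‖b‖ := by ring

theorem abs_add_add_abs_sub_eq_two_mul_max {x c : ℝ} (hc : 0 ≤ c) :
    |x + c| + |x - c| = 2 * max |x| c := by
  rcases le_total |x| c with h | h
  · rw [max_eq_right h, abs_of_nonneg (by linarith [neg_abs_le x]),
      abs_of_nonpos (by linarith [le_abs_self x])]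
    ring
  · rw [max_eq_left h]
    rcases abs_cases x with ⟨hx, _⟩ | ⟨hx, _⟩ <;> rw [hx] at h ⊢
    · rw [abs_of_nonneg (by linarith), abs_of_nonneg (by linarith)]; ring
    · rw [abs_of_nonpos (by linarith), abs_of_nonpos (by linarith)]; ring

/-- **The Fekete–Szegő computation in the proof of Theorem 2.2.** Under the coefficient
relations (15)–(18), with `h₂ ≠ 0` and `6h₂² - 8h₃ ≠ 0`, one has
`a₃ - η a₂² = h₂ [(Θ + 1/6) p₂ + (Θ - 1/6) q₂]` where
`Θ = h₂² (1 - η)/(6h₂² - 8h₃)`; consequently, if `|p₂| ≤ 1` and `|q₂| ≤ 1`, then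
`|a₃ - η a₂²| ≤ |h₂|/3` when `|Θ| ≤ 1/6`, and `|a₃ - η a₂²| ≤ 2|h₂||Θ|` when
`|Θ| ≥ 1/6`. -/
theorem fekete_szego_computation (h₂ h₃ η : ℝ) (a₂ a₃ p₁ p₂ q₁ q₂ : ℂ)
    (hh₂ : h₂ ≠ 0) (hden : 6 * h₂ ^ 2 - 8 * h₃ ≠ 0)
    (e15 : 2 * a₂ = (h₂ : ℂ) * p₁)
    (e16 : 3 * a₃ = (h₂ : ℂ) * p₂ + (h₃ : ℂ) * p₁ ^ 2)
    (e17 : -2 * a₂ = (h₂ : ℂ) * q₁)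
    (e18 : 3 * (2 * a₂ ^ 2 - a₃) = (h₂ : ℂ) * q₂ + (h₃ : ℂ) * q₁ ^ 2) :
    a₃ - (η : ℂ) * a₂ ^ 2 =
      (h₂ : ℂ) * ((((h₂ ^ 2 * (1 - η) / (6 * h₂ ^ 2 - 8 * h₃) : ℝ) : ℂ) + 1 / 6) * p₂ +
        ((((h₂ ^ 2 * (1 - η) / (6 * h₂ ^ 2 - 8 * h₃) : ℝ) : ℂ) - 1 / 6) * q₂)) ∧
    (‖p₂‖ ≤ 1 → ‖q₂‖ ≤ 1 →
      ((|h₂ ^ 2 * (1 - η) / (6 * h₂ ^ 2 - 8 * h₃)| ≤ 1 / 6 →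
          ‖a₃ - (η : ℂ) * a₂ ^ 2‖ ≤ |h₂| / 3) ∧
        (1 / 6 ≤ |h₂ ^ 2 * (1 - η) / (6 * h₂ ^ 2 - 8 * h₃)| →
          ‖a₃ - (η : ℂ) * a₂ ^ 2‖ ≤
            2 * |h₂| * |h₂ ^ 2 * (1 - η) / (6 * h₂ ^ 2 - 8 * h₃)|))) := by
  set Θ : ℝ := h₂ ^ 2 * (1 - η) / (6 * h₂ ^ 2 - 8 * h₃)
  have hid : a₃ - (η : ℂ) * a₂ ^ 2 =
      (h₂ : ℂ) * (((Θ + 1 / 6 : ℝ) : ℂ) * p₂ + ((Θ - 1 / 6 : ℝ) : ℂ) * q₂) := by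
    have hdenℂ : 6 * (h₂ : ℂ) ^ 2 - 8 * h₃ ≠ 0 := by exact_mod_cast hden
    rw [sub_mul_sq_eq_of_coeff_relations (by exact_mod_cast hh₂) hdenℂ e15 e16 e17 e18]
    simp only [feketeSzegoTheta, Θ]
    push_cast
    ring
  refine ⟨by rw [hid]; push_cast; ring, fun hp hq => ?_⟩
  have hbound : ‖a₃ - (η : ℂ) * a₂ ^ 2‖ ≤ |h₂| * (2 * max |Θ| (1 / 6)) := by
    rw [hid, norm_mul, Complex.norm_real, Real.norm_eq_abs,
      ← abs_add_add_abs_sub_eq_two_mul_max (by norm_num)]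
    gcongr
    simpa only [Complex.norm_real, Real.norm_eq_abs] using
      norm_mul_add_mul_le_of_norm_le_one (a := ((Θ + 1 / 6 : ℝ) : ℂ))
        (b := ((Θ - 1 / 6 : ℝ) : ℂ)) hp hq
  refine ⟨fun hsmall => ?_, fun hbig => ?_⟩
  · rw [max_eq_right hsmall] at hbound
    linarith
  · rw [max_eq_left hbig] at hbound
    linarith
end

section
/- Let a, b, p, q, x be real numbers with b x ≠ 0 and b x²(3b − 4p) − 4 a q ≠ 0, set h₂ = b x and h₃ = p b x² + a q, and let a₂, a₃, p₁, p₂, q₁, q₂ be complex numbers with |p₁| ≤ 1, |p₂| ≤ 1, |q₁| ≤ 1, |q₂| ≤ 1 satisfying 2a₂ = h₂ p₁, 3a₃ = h₂ p₂ + h₃ p₁², −2a₂ = h₂ q₁, and 3(2a₂² − a₃) = h₂ q₂ + h₃ q₁². Then |a₂| ≤ (|b x| · √|b x|) / √|b x²(3b − 4p) − 4 a q| and |a₃| ≤ |b x|/3 + (b x)²/4. -/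
/-!
Writing `h₂, h₃` for the Horadam values, (15) and (17) give `h₂² p₁² = h₂² q₁² = 4 a₂²`.
Adding (16) and (18) then eliminates `a₃` and yields `2 a₂² (3 h₂² - 4 h₃) = h₂³ (p₂ + q₂)`,
where `3 h₂² - 4 h₃ = b x² (3b - 4p) - 4aq`; subtracting them (and using `q₁ = -p₁`, which needs
`h₂ ≠ 0`) yields `12 a₃ = 3 h₂² p₁² + 2 h₂ (p₂ - q₂)`. Both bounds then follow from the
triangle inequality, the Schwarz coefficients having modulus at most `1`.
-/

/-- The coefficient comparisons (15)–(18): `a₂, a₃` are the coefficients of `f`, and `p₁, p₂`,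
`q₁, q₂` those of the Schwarz functions in the subordinations of `f` and of its inverse. -/
structure CoeffRelations {R : Type*} [CommRing R] (h₂ h₃ a₂ a₃ p₁ p₂ q₁ q₂ : R) : Prop where
  fst₂ : 2 * a₂ = h₂ * p₁
  fst₃ : 3 * a₃ = h₂ * p₂ + h₃ * p₁ ^ 2
  inv₂ : -2 * a₂ = h₂ * q₁
  inv₃ : 3 * (2 * a₂ ^ 2 - a₃) = h₂ * q₂ + h₃ * q₁ ^ 2

namespace CoeffRelations

section CommRing

variable {R : Type*} [CommRing R] {h₂ h₃ a₂ a₃ p₁ p₂ q₁ q₂ : R}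

theorem two_mul_sq_mul_eq (hr : CoeffRelations h₂ h₃ a₂ a₃ p₁ p₂ q₁ q₂) :
    2 * a₂ ^ 2 * (3 * h₂ ^ 2 - 4 * h₃) = h₂ ^ 3 * (p₂ + q₂) := by
  linear_combination h₂ ^ 2 * hr.fst₃ + h₂ ^ 2 * hr.inv₃
    - h₃ * (2 * a₂ + h₂ * p₁) * hr.fst₂ - h₃ * (-2 * a₂ + h₂ * q₁) * hr.inv₂

variable [IsDomain R]

theorem q₁_eq_neg (hr : CoeffRelations h₂ h₃ a₂ a₃ p₁ p₂ q₁ q₂) (h₂_ne : h₂ ≠ 0) : q₁ = -p₁ :=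
  mul_left_cancel₀ h₂_ne (by linear_combination -hr.inv₂ - hr.fst₂)

theorem twelve_mul_eq (hr : CoeffRelations h₂ h₃ a₂ a₃ p₁ p₂ q₁ q₂) (h₂_ne : h₂ ≠ 0) :
    12 * a₃ = 3 * h₂ ^ 2 * p₁ ^ 2 + 2 * h₂ * (p₂ - q₂) := by
  obtain rfl := hr.q₁_eq_neg h₂_ne
  linear_combination 2 * hr.fst₃ - 2 * hr.inv₃ + 3 * (2 * a₂ + h₂ * p₁) * hr.fst₂

end CommRing

end CoeffRelations

section Bounds

variable {𝕜 : Type*} [RCLike 𝕜]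

theorem norm_le_of_two_mul_sq_mul_eq {a h d s : 𝕜} (hd : d ≠ 0) (hs : ‖s‖ ≤ 2)
    (e : 2 * a ^ 2 * d = h ^ 3 * s) : ‖a‖ ≤ ‖h‖ * √‖h‖ / √‖d‖ := by
  have hd_pos : 0 < ‖d‖ := norm_pos_iff.mpr hd
  have hnorm : 2 * ‖a‖ ^ 2 * ‖d‖ = ‖h‖ ^ 3 * ‖s‖ := by
    simpa only [norm_mul, norm_pow, RCLike.norm_ofNat] using congrArg norm e
  have hsq : ‖a‖ ^ 2 ≤ (‖h‖ * √‖h‖ / √‖d‖) ^ 2 := by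
    rw [div_pow, mul_pow, Real.sq_sqrt (norm_nonneg _), Real.sq_sqrt hd_pos.le, le_div_iff₀ hd_pos]
    nlinarith [pow_nonneg (norm_nonneg h) 3]
  exact (pow_le_pow_iff_left₀ (norm_nonneg _) (by positivity) two_ne_zero).mp hsq

theorem norm_le_of_twelve_mul_eq {a h p₁ p₂ q₂ : 𝕜} (hp₁ : ‖p₁‖ ≤ 1) (hp₂ : ‖p₂‖ ≤ 1)
    (hq₂ : ‖q₂‖ ≤ 1) (e : 12 * a = 3 * h ^ 2 * p₁ ^ 2 + 2 * h * (p₂ - q₂)) :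
    ‖a‖ ≤ ‖h‖ / 3 + ‖h‖ ^ 2 / 4 := by
  have hp₁_sq : ‖p₁‖ ^ 2 ≤ 1 := pow_le_one₀ (norm_nonneg _) hp₁
  have hdiff : ‖p₂ - q₂‖ ≤ 2 := (norm_sub_le _ _).trans (by linarith)
  have htri : 12 * ‖a‖ ≤ 3 * ‖h‖ ^ 2 * ‖p₁‖ ^ 2 + 2 * ‖h‖ * ‖p₂ - q₂‖ := by
    calc 12 * ‖a‖ = ‖3 * h ^ 2 * p₁ ^ 2 + 2 * h * (p₂ - q₂)‖ := by
          rw [← e, norm_mul, RCLike.norm_ofNat]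
      _ ≤ _ := by
          refine (norm_add_le _ _).trans_eq ?_
          simp only [norm_mul, norm_pow, RCLike.norm_ofNat]
  nlinarith [norm_nonneg h, sq_nonneg ‖h‖]

end Bounds

theorem coefficient_bounds_of_relations_general (a b p q x : ℝ) (a₂ a₃ p₁ p₂ q₁ q₂ : ℂ)
    (hbx : b * x ≠ 0) (hne : b * x ^ 2 * (3 * b - 4 * p) - 4 * a * q ≠ 0)
    (hp₁ : ‖p₁‖ ≤ 1) (hp₂ : ‖p₂‖ ≤ 1)
    (hq₂ : ‖q₂‖ ≤ 1)
    (e15 : 2 * a₂ = ((b * x : ℝ) : ℂ) * p₁)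
    (e16 : 3 * a₃ = ((b * x : ℝ) : ℂ) * p₂ + ((p * b * x ^ 2 + q * a : ℝ) : ℂ) * p₁ ^ 2)
    (e17 : -2 * a₂ = ((b * x : ℝ) : ℂ) * q₁)
    (e18 : 3 * (2 * a₂ ^ 2 - a₃) =
      ((b * x : ℝ) : ℂ) * q₂ + ((p * b * x ^ 2 + q * a : ℝ) : ℂ) * q₁ ^ 2) :
    ‖a₂‖ ≤
        (|b * x| * Real.sqrt |b * x|) / Real.sqrt |b * x ^ 2 * (3 * b - 4 * p) - 4 * a * q| ∧
      ‖a₃‖ ≤ |b * x| / 3 + (b * x) ^ 2 / 4 := by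
  have hr : CoeffRelations _ _ a₂ a₃ p₁ p₂ q₁ q₂ := ⟨e15, e16, e17, e18⟩
  have hD : 3 * ((b * x : ℝ) : ℂ) ^ 2 - 4 * ((p * b * x ^ 2 + q * a : ℝ) : ℂ) =
      ((b * x ^ 2 * (3 * b - 4 * p) - 4 * a * q : ℝ) : ℂ) := by
    push_cast
    ring
  have hsum : ‖p₂ + q₂‖ ≤ 2 := (norm_add_le _ _).trans (by linarith)
  have ha₂ := norm_le_of_two_mul_sq_mul_eq (by exact_mod_cast hne) hsum
    (hD ▸ hr.two_mul_sq_mul_eq)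
  have ha₃ := norm_le_of_twelve_mul_eq hp₁ hp₂ hq₂ (hr.twelve_mul_eq (by exact_mod_cast hbx))
  simp only [Complex.norm_real, Real.norm_eq_abs] at ha₂ ha₃
  exact ⟨ha₂, by rwa [← sq_abs (b * x)]⟩

/-- **Theorem 2.2 in coefficient-inequality form.** If `b x ≠ 0`,
`b x²(3b - 4p) - 4 a q ≠ 0`, `h₂ = b x`, `h₃ = p b x² + a q`, the Schwarz coefficients
`p₁, p₂, q₁, q₂` have modulus at most `1`, and the coefficient comparisons (15)–(18)
hold, then `|a₂| ≤ |b x| √|b x| / √|b x²(3b - 4p) - 4 a q|` and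
`|a₃| ≤ |b x|/3 + (b x)²/4`. -/
theorem coefficient_bounds_of_relations (a b p q x : ℝ) (a₂ a₃ p₁ p₂ q₁ q₂ : ℂ)
    (hbx : b * x ≠ 0) (hne : b * x ^ 2 * (3 * b - 4 * p) - 4 * a * q ≠ 0)
    (hp₁ : ‖p₁‖ ≤ 1) (hp₂ : ‖p₂‖ ≤ 1)
    (hq₁ : ‖q₁‖ ≤ 1) (hq₂ : ‖q₂‖ ≤ 1)
    (e15 : 2 * a₂ = ((b * x : ℝ) : ℂ) * p₁)
    (e16 : 3 * a₃ = ((b * x : ℝ) : ℂ) * p₂ + ((p * b * x ^ 2 + q * a : ℝ) : ℂ) * p₁ ^ 2)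
    (e17 : -2 * a₂ = ((b * x : ℝ) : ℂ) * q₁)
    (e18 : 3 * (2 * a₂ ^ 2 - a₃) =
      ((b * x : ℝ) : ℂ) * q₂ + ((p * b * x ^ 2 + q * a : ℝ) : ℂ) * q₁ ^ 2) :
    ‖a₂‖ ≤
        (|b * x| * Real.sqrt |b * x|) / Real.sqrt |b * x ^ 2 * (3 * b - 4 * p) - 4 * a * q| ∧
      ‖a₃‖ ≤ |b * x| / 3 + (b * x) ^ 2 / 4 :=
  coefficient_bounds_of_relations_general a b p q x a₂ a₃ p₁ p₂ q₁ q₂ hbx hne hp₁ hp₂ hq₂ e15 e16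
    e17 e18
end
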